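/- arXiv:2411.10096 — 2 statements merged into one kernel-verified Lean document; each statement's English description precedes it below -/
import Mathlib

section
/- Consider the implicit discrete-time port-Hamiltonian system ξ_{k+1} = ξ_k + h(J − (αI + Λ))∇̄H(ξ_{k+1}, ξ_k) + h G y_k with output u_k = Gᵀ∇̄H(ξ_{k+1}, ξ_k), where J is skew-symmetric, Λ diagonal nonnegative, h > 0, H ≥ 0, ∇̄H is any discrete gradient of H, and α ≥ ε·λ_max(G Gᵀ) for some ε > 0. Then along any solution, H(ξ_{k+1}) − H(ξ_k) ≤ h(u_kᵀy_k − ε‖u_k‖²) for every k; i.e., the discrete-time system is ε-output strictly passive. -/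
/-!
With `v = ∇̄H(ξₖ₊₁, ξₖ)`, the discrete-gradient property makes the energy increment exactly
`h (vᵀ(J − αI − Λ)v + (Gᵀv)ᵀyₖ)`, and `Gᵀv = uₖ`. Skew-symmetry kills `vᵀJv`, while in the
Loewner order `εGGᵀ ≤ ε λ_max(GGᵀ) I ≤ αI ≤ αI + Λ`, so `−vᵀ(αI + Λ)v ≤ −ε‖Gᵀv‖² = −ε‖uₖ‖²`.
-/

open Matrix
open scoped MatrixOrder

namespace Matrix

variable {n m : Type*}

theorem IsDiag.posSemidef {R : Type*} [CommRing R] [PartialOrder R] [StarRing R]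
    [StarOrderedRing R] [DecidableEq n] {Λ : Matrix n n R} (hΛ : Λ.IsDiag)
    (hΛ_nonneg : ∀ i, 0 ≤ Λ i i) : Λ.PosSemidef :=
  hΛ.diagonal_diag ▸ posSemidef_diagonal_iff.mpr hΛ_nonneg

variable [Fintype n] [Fintype m]

theorem dotProduct_mulVec_self_eq_zero_of_transpose_eq_neg {R : Type*} [CommRing R]
    [IsAddTorsionFree R] {J : Matrix n n R} (hJ : Jᵀ = -J) (v : n → R) :
    v ⬝ᵥ (J *ᵥ v) = 0 :=
  self_eq_neg.mp <| by
    conv_lhs =>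
      rw [dotProduct_mulVec, ← mulVec_transpose, hJ, neg_mulVec, neg_dotProduct, dotProduct_comm]

theorem dotProduct_mulVec_mul_transpose {R : Type*} [CommSemiring R] (G : Matrix n m R)
    (v : n → R) : v ⬝ᵥ ((G * Gᵀ) *ᵥ v) = (Gᵀ *ᵥ v) ⬝ᵥ (Gᵀ *ᵥ v) := by
  rw [← mulVec_mulVec, dotProduct_mulVec, mulVec_transpose]

theorem IsHermitian.le_algebraMap_iSup_eigenvalues {𝕜 : Type*} [RCLike 𝕜] [DecidableEq n]
    {A : Matrix n n 𝕜} (hA : A.IsHermitian) :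
    A ≤ algebraMap ℝ (Matrix n n 𝕜) (⨆ i, hA.eigenvalues i) :=
  le_algebraMap_of_spectrum_le (fun x hx => by
    obtain ⟨i, rfl⟩ := hA.spectrum_real_eq_range_eigenvalues ▸ hx
    exact le_ciSup (Set.finite_range _).bddAbove i) hA

open scoped ComplexOrder in
theorem star_dotProduct_mulVec_le_of_le {𝕜 : Type*} [RCLike 𝕜] {A B : Matrix n n 𝕜}
    (hAB : A ≤ B) (v : n → 𝕜) : star v ⬝ᵥ (A *ᵥ v) ≤ star v ⬝ᵥ (B *ᵥ v) := by
  simpa [sub_mulVec, dotProduct_sub] using (le_iff.mp hAB).dotProduct_mulVec_nonneg v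

theorem smul_mul_transpose_le_smul_one_add [DecidableEq n] {G : Matrix n m ℝ}
    {Λ : Matrix n n ℝ} (hΛ : Λ.PosSemidef) {ε α : ℝ} (hε : 0 ≤ ε)
    (hGGT : (G * Gᵀ).IsHermitian) (hα : ε * (⨆ i, hGGT.eigenvalues i) ≤ α) :
    ε • (G * Gᵀ) ≤ α • 1 + Λ :=
  calc ε • (G * Gᵀ) ≤ ε • algebraMap ℝ _ (⨆ i, hGGT.eigenvalues i) :=
        smul_le_smul_of_nonneg_left hGGT.le_algebraMap_iSup_eigenvalues hε
    _ = (ε * ⨆ i, hGGT.eigenvalues i) • 1 := by rw [Algebra.algebraMap_eq_smul_one, smul_smul]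
    _ ≤ α • 1 := smul_le_smul_of_nonneg_right hα zero_le_one
    _ ≤ α • 1 + Λ := le_add_of_nonneg_right hΛ.nonneg

end Matrix

theorem discreteGradient_energy_balance {n m R : Type*} [Fintype n] [Fintype m] [CommRing R]
    {H : (n → R) → R} {K : Matrix n n R} {G : Matrix n m R} {a b v : n → R} {y : m → R} {h : R}
    (hv : v ⬝ᵥ (b - a) = H b - H a) (hstep : a = b + h • (K *ᵥ v) + h • (G *ᵥ y)) :
    H a - H b = h * (v ⬝ᵥ (K *ᵥ v) + (Gᵀ *ᵥ v) ⬝ᵥ y) := by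
  rw [← neg_sub, ← hv, ← dotProduct_neg, neg_sub, hstep, add_assoc, add_sub_cancel_left,
    dotProduct_add, dotProduct_smul, dotProduct_smul, smul_eq_mul, smul_eq_mul,
    dotProduct_mulVec v G, mulVec_transpose, mul_add]

theorem discrete_pH_output_strict_passivity_general
    {n m : ℕ} (J Λ : Matrix (Fin n) (Fin n) ℝ) (G : Matrix (Fin n) (Fin m) ℝ)
    (hJ : Jᵀ = -J) (hΛdiag : Λ.IsDiag) (hΛpos : ∀ i, 0 ≤ Λ i i)
    (h ε α : ℝ) (hh : 0 < h) (hε : 0 < ε)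
    (H : (Fin n → ℝ) → ℝ)
    (DH : (Fin n → ℝ) → (Fin n → ℝ) → (Fin n → ℝ))
    (hDG : ∀ a b : Fin n → ℝ, DH a b ⬝ᵥ (b - a) = H b - H a)
    (hGGT : (G * Gᵀ).IsHermitian)
    (hα : ε * (⨆ i, hGGT.eigenvalues i) ≤ α)
    (ξ : ℕ → (Fin n → ℝ)) (y u : ℕ → (Fin m → ℝ))
    (hdyn : ∀ k, ξ (k + 1) = ξ k
        + h • ((J - (α • (1 : Matrix (Fin n) (Fin n) ℝ) + Λ)) *ᵥ DH (ξ (k + 1)) (ξ k))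
        + h • (G *ᵥ y k))
    (hout : ∀ k, u k = Gᵀ *ᵥ DH (ξ (k + 1)) (ξ k)) :
    ∀ k, H (ξ (k + 1)) - H (ξ k) ≤ h * (u k ⬝ᵥ y k - ε * (u k ⬝ᵥ u k)) := by
  intro k
  set v := DH (ξ (k + 1)) (ξ k)
  have hdissipation : ε * (u k ⬝ᵥ u k) ≤ v ⬝ᵥ ((α • 1 + Λ) *ᵥ v) := by
    have := star_dotProduct_mulVec_le_of_le
      (smul_mul_transpose_le_smul_one_add (hΛdiag.posSemidef hΛpos) hε.le hGGT hα) v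
    rwa [star_trivial, smul_mulVec, dotProduct_smul, dotProduct_mulVec_mul_transpose, ← hout k,
      smul_eq_mul] at this
  rw [discreteGradient_energy_balance (hDG _ _) (hdyn k), ← hout k, sub_mulVec, dotProduct_sub,
    dotProduct_mulVec_self_eq_zero_of_transpose_eq_neg hJ]
  gcongr
  linarith

/-- the implicit discrete-time port-Hamiltonian system
`ξ_{k+1} = ξ_k + h(J − (αI + Λ))∇̄H(ξ_{k+1}, ξ_k) + h G y_k`,
`u_k = Gᵀ∇̄H(ξ_{k+1}, ξ_k)`, with `J` skew, `Λ` diagonal nonnegative, `h > 0`, `H ≥ 0`,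
`∇̄H` a discrete gradient of `H`, and `α ≥ ε·λ_max(G Gᵀ)`, satisfies
`H(ξ_{k+1}) − H(ξ_k) ≤ h(u_kᵀy_k − ε‖u_k‖²)` for all `k`. -/
theorem discrete_pH_output_strict_passivity
    {n m : ℕ} (J Λ : Matrix (Fin n) (Fin n) ℝ) (G : Matrix (Fin n) (Fin m) ℝ)
    (hJ : Jᵀ = -J) (hΛdiag : Λ.IsDiag) (hΛpos : ∀ i, 0 ≤ Λ i i)
    (h ε α : ℝ) (hh : 0 < h) (hε : 0 < ε)
    (H : (Fin n → ℝ) → ℝ) (hHpos : ∀ z, 0 ≤ H z)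
    (DH : (Fin n → ℝ) → (Fin n → ℝ) → (Fin n → ℝ))
    (hDG : ∀ a b : Fin n → ℝ, DH a b ⬝ᵥ (b - a) = H b - H a)
    (hDGcons : ∀ a : Fin n → ℝ, DH a a = fun i => deriv (fun s => H (Function.update a i s)) (a i))
    (hGGT : (G * Gᵀ).IsHermitian)
    (hα : ε * (⨆ i, hGGT.eigenvalues i) ≤ α)
    (ξ : ℕ → (Fin n → ℝ)) (y u : ℕ → (Fin m → ℝ))
    (hdyn : ∀ k, ξ (k + 1) = ξ k
        + h • ((J - (α • (1 : Matrix (Fin n) (Fin n) ℝ) + Λ)) *ᵥ DH (ξ (k + 1)) (ξ k))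
        + h • (G *ᵥ y k))
    (hout : ∀ k, u k = Gᵀ *ᵥ DH (ξ (k + 1)) (ξ k)) :
    ∀ k, H (ξ (k + 1)) - H (ξ k) ≤ h * (u k ⬝ᵥ y k - ε * (u k ⬝ᵥ u k)) :=
  discrete_pH_output_strict_passivity_general J Λ G hJ hΛdiag hΛpos h ε α hh hε H DH hDG hGGT hα ξ y
    u hdyn hout
end

section
/- Consider the variational/incremental system δξ' = (J − (αI + Λ)) M δξ + G δy, δu = Gᵀ M δξ, where J is skew-symmetric, Λ diagonal nonnegative, M constant symmetric with c₁I ⪯ M ⪯ c₂I (c₁ > 0), and α ≥ ε λ_max(GGᵀ) for ε > 0. Then with V(δξ) = (1/2)δξᵀMδξ one has d/dt V(δξ(t)) ≤ δu(t)ᵀδy(t) − ε‖δu(t)‖² along all trajectories. -/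
open Matrix

lemma rayleigh_sup {n : ℕ} {A : Matrix (Fin n) (Fin n) ℝ} (hA : A.IsHermitian)
    (w : Fin n → ℝ) :
    w ⬝ᵥ (A *ᵥ w) ≤ (⨆ i, hA.eigenvalues i) * (w ⬝ᵥ w) := by
  set U : Matrix (Fin n) (Fin n) ℝ := (hA.eigenvectorUnitary : Matrix (Fin n) (Fin n) ℝ) with hU
  set z : Fin n → ℝ := star U *ᵥ w with hz
  have hzz : z ⬝ᵥ z = w ⬝ᵥ w := by
    rw [hz, dotProduct_mulVec, ← mulVec_transpose, mulVec_mulVec]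
    have : (star U)ᵀ * star U = 1 := by
      have : U * star U = 1 := Unitary.coe_mul_star_self hA.eigenvectorUnitary
      simpa [Matrix.star_eq_conjTranspose, Matrix.conjTranspose_eq_transpose_of_trivial] using this
    rw [this, one_mulVec]
  have hq : w ⬝ᵥ (A *ᵥ w) = ∑ i, hA.eigenvalues i * (z i)^2 := by
    conv_lhs => rw [hA.spectral_theorem, Unitary.conjStarAlgAut_apply]
    rw [← mulVec_mulVec, ← mulVec_mulVec, dotProduct_mulVec, ← mulVec_transpose]
    have hUT : Uᵀ = star U := by
      simp [Matrix.star_eq_conjTranspose, Matrix.conjTranspose_eq_transpose_of_trivial]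
    rw [hUT, ← hz]
    simp [dotProduct, diagonal_mulVec_single, mulVec_diagonal, sq, mul_comm, Function.comp]
    ring_nf
    congr 1
    exact funext fun i => by ring
  have hbdd : BddAbove (Set.range hA.eigenvalues) := (Set.finite_range _).bddAbove
  calc w ⬝ᵥ (A *ᵥ w) = ∑ i, hA.eigenvalues i * (z i)^2 := hq
    _ ≤ ∑ i, (⨆ j, hA.eigenvalues j) * (z i)^2 :=
        Finset.sum_le_sum fun i _ =>
          mul_le_mul_of_nonneg_right (le_ciSup hbdd i) (sq_nonneg _)
    _ = (⨆ j, hA.eigenvalues j) * (z ⬝ᵥ z) := by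
        rw [← Finset.mul_sum]; congr 1; simp [dotProduct, sq]
    _ = (⨆ j, hA.eigenvalues j) * (w ⬝ᵥ w) := by rw [hzz]

/-- for the variational system
`δξ' = (J − (αI + Λ)) M δξ + G δy`, `δu = Gᵀ M δξ` with constant symmetric `M`
satisfying `c₁I ⪯ M ⪯ c₂I` (`c₁ > 0`), `J` skew, `Λ` diagonal nonnegative and
`α ≥ ε λ_max(GGᵀ)`, the storage `V(δξ) = (1/2)δξᵀMδξ` satisfies
`d/dt V(δξ(t)) ≤ δu(t)ᵀδy(t) − ε‖δu(t)‖²` along all trajectories. -/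
theorem variational_pH_incremental_passivity
    {n m : ℕ} (J Λ M : Matrix (Fin n) (Fin n) ℝ) (G : Matrix (Fin n) (Fin m) ℝ)
    (hJ : Jᵀ = -J) (hΛdiag : Λ.IsDiag) (hΛpos : ∀ i, 0 ≤ Λ i i)
    (hM : Mᵀ = M) (c₁ c₂ : ℝ) (hc₁ : 0 < c₁)
    (hMbounds : ∀ v : Fin n → ℝ,
      c₁ * (v ⬝ᵥ v) ≤ v ⬝ᵥ (M *ᵥ v) ∧ v ⬝ᵥ (M *ᵥ v) ≤ c₂ * (v ⬝ᵥ v))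
    (ε α : ℝ) (hε : 0 < ε)
    (hGGT : (G * Gᵀ).IsHermitian)
    (hα : ε * (⨆ i, hGGT.eigenvalues i) ≤ α)
    (δξ : ℝ → (Fin n → ℝ)) (δy δu : ℝ → (Fin m → ℝ))
    (hode : ∀ t, HasDerivAt δξ
      ((J - (α • (1 : Matrix (Fin n) (Fin n) ℝ) + Λ)) *ᵥ (M *ᵥ δξ t) + G *ᵥ δy t) t)
    (hout : ∀ t, δu t = Gᵀ *ᵥ (M *ᵥ δξ t)) :
    ∀ (t dV : ℝ),
      HasDerivAt (fun s => (1 / 2 : ℝ) * (δξ s ⬝ᵥ (M *ᵥ δξ s))) dV t →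
        dV ≤ δu t ⬝ᵥ δy t - ε * (δu t ⬝ᵥ δu t) := by
  intro t dV hdV
  set d : Fin n → ℝ :=
    (J - (α • (1 : Matrix (Fin n) (Fin n) ℝ) + Λ)) *ᵥ (M *ᵥ δξ t) + G *ᵥ δy t with hd
  set w : Fin n → ℝ := M *ᵥ δξ t with hw
  -- derivative of V
  have hcomp : ∀ i, HasDerivAt (fun s => δξ s i) (d i) t := hasDerivAt_pi.1 (hode t)
  have hV : HasDerivAt (fun s => (1 / 2 : ℝ) * (δξ s ⬝ᵥ (M *ᵥ δξ s)))
      ((1 / 2 : ℝ) * (d ⬝ᵥ (M *ᵥ δξ t) + δξ t ⬝ᵥ (M *ᵥ d))) t := by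
    have : HasDerivAt (fun s => δξ s ⬝ᵥ (M *ᵥ δξ s))
        (d ⬝ᵥ (M *ᵥ δξ t) + δξ t ⬝ᵥ (M *ᵥ d)) t := by
      have hterm : ∀ i, HasDerivAt (fun s => δξ s i * (M *ᵥ δξ s) i)
          (d i * (M *ᵥ δξ t) i + δξ t i * (M *ᵥ d) i) t := by
        intro i
        have hMi : HasDerivAt (fun s => (M *ᵥ δξ s) i) ((M *ᵥ d) i) t := by
          simp only [mulVec, dotProduct]
          exact HasDerivAt.fun_sum fun j _ => (hcomp j).const_mul (M i j)
        exact (hcomp i).mul hMi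
      have := HasDerivAt.fun_sum (u := Finset.univ)
        (fun i _ => hterm i)
      simpa [dotProduct, Finset.sum_add_distrib] using this
    exact this.const_mul _
  have hdV' : dV = (1 / 2 : ℝ) * (d ⬝ᵥ (M *ᵥ δξ t) + δξ t ⬝ᵥ (M *ᵥ d)) :=
    hdV.unique hV
  -- symmetry: d ⬝ᵥ M δξ = δξ ⬝ᵥ M d, and δξ ⬝ᵥ M d = w ⬝ᵥ d
  have hsymm : ∀ a b : Fin n → ℝ, a ⬝ᵥ (M *ᵥ b) = b ⬝ᵥ (M *ᵥ a) := by
    intro a b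
    rw [dotProduct_mulVec, ← mulVec_transpose, hM, dotProduct_comm]
  have hdV2 : dV = w ⬝ᵥ d := by
    rw [hdV', hsymm d (δξ t)]
    rw [hw, dotProduct_mulVec, ← mulVec_transpose, hM]
    ring
  -- expand w ⬝ᵥ d
  have hexp : w ⬝ᵥ d = w ⬝ᵥ (J *ᵥ w) - α * (w ⬝ᵥ w) - w ⬝ᵥ (Λ *ᵥ w) + w ⬝ᵥ (G *ᵥ δy t) := by
    rw [hd]
    simp [dotProduct_add, sub_mulVec, add_mulVec, dotProduct_sub, smul_mulVec,
      one_mulVec, dotProduct_smul, smul_eq_mul]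
    ring
  -- skew term vanishes
  have hJ0 : w ⬝ᵥ (J *ᵥ w) = 0 := by
    have h1 : w ⬝ᵥ (J *ᵥ w) = (Jᵀ *ᵥ w) ⬝ᵥ w := by
      rw [dotProduct_mulVec, ← mulVec_transpose]
    have h2 : (Jᵀ *ᵥ w) ⬝ᵥ w = -(w ⬝ᵥ (J *ᵥ w)) := by
      rw [hJ, neg_mulVec, neg_dotProduct, dotProduct_comm]
    linarith [h1, h2]
  -- Λ term nonneg
  have hΛ0 : 0 ≤ w ⬝ᵥ (Λ *ᵥ w) := by
    have : w ⬝ᵥ (Λ *ᵥ w) = ∑ i, Λ i i * (w i)^2 := by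
      simp only [dotProduct, mulVec, dotProduct]
      congr 1
      funext i
      rw [Finset.mul_sum, Finset.sum_eq_single i]
      · ring
      · intro j _ hji
        rw [hΛdiag (Ne.symm hji)]
        ring
      · intro h; exact absurd (Finset.mem_univ i) h
    rw [this]
    exact Finset.sum_nonneg fun i _ => mul_nonneg (hΛpos i) (sq_nonneg _)
  -- output terms
  have hu : δu t = Gᵀ *ᵥ w := by rw [hout t, hw]
  have huy : w ⬝ᵥ (G *ᵥ δy t) = δu t ⬝ᵥ δy t := by
    rw [hu, dotProduct_mulVec, ← mulVec_transpose]
  have huu : δu t ⬝ᵥ δu t = w ⬝ᵥ ((G * Gᵀ) *ᵥ w) := by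
    conv_rhs => rw [← mulVec_mulVec, dotProduct_mulVec, ← mulVec_transpose]
    rw [hu]
  -- Rayleigh bound
  have hray : ε * (δu t ⬝ᵥ δu t) ≤ α * (w ⬝ᵥ w) := by
    rw [huu]
    have h1 : w ⬝ᵥ ((G * Gᵀ) *ᵥ w) ≤ (⨆ i, hGGT.eigenvalues i) * (w ⬝ᵥ w) :=
      rayleigh_sup hGGT w
    have hww : (0:ℝ) ≤ w ⬝ᵥ w := by
      simpa [dotProduct] using Finset.sum_nonneg fun i (_ : i ∈ Finset.univ) => mul_self_nonneg (w i)
    calc ε * (w ⬝ᵥ ((G * Gᵀ) *ᵥ w)) ≤ ε * ((⨆ i, hGGT.eigenvalues i) * (w ⬝ᵥ w)) :=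
          mul_le_mul_of_nonneg_left h1 hε.le
      _ = (ε * (⨆ i, hGGT.eigenvalues i)) * (w ⬝ᵥ w) := by ring
      _ ≤ α * (w ⬝ᵥ w) := mul_le_mul_of_nonneg_right hα hww
  -- put it together
  rw [hdV2, hexp, hJ0, huy]
  linarith
end
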